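/- Consider a maximal forward solution of the shooting system with admissible initial data and suppose r₀ ≥ 1. Then either (r₀, w₀, U₀) = (1, 0, 0) and the solution is trivial with r ≡ 1 and w ≡ 0, or N(ρ) > 0 for every ρ > 0 in the domain such that |w(s)| ≤ 1 holds for all 0 ≤ s ≤ ρ. -/

import Mathlib

open Filter Topology Set Real

noncomputable section

/-- The initial energy `E₀ = 1 + 2U₀² − (1 − w₀²)²/r₀²`. -/
def initialEnergy (r₀ w₀ U₀ : ℝ) : ℝ := 1 + 2 * U₀ ^ 2 - (1 - w₀ ^ 2) ^ 2 / r₀ ^ 2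

/-- Admissible initial data `(r₀, w₀, U₀)`: `r₀ > 0`, `|w₀| ≤ 1`, `E₀ ≥ 0`. -/
def Admissible (r₀ w₀ U₀ : ℝ) : Prop :=
  0 < r₀ ∧ |w₀| ≤ 1 ∧ 0 ≤ initialEnergy r₀ w₀ U₀

/-- The forward domain `[0, ρmax) ⊆ ℝ`, for `ρmax ∈ (0, ∞]`. -/
def fwdDom (ρmax : EReal) : Set ℝ := {ρ : ℝ | 0 ≤ ρ ∧ (ρ : EReal) < ρmax}

/-- `(r, N, w, U, κ, ζ)` solves the shooting system on `[0, ρmax)` with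
initial data `(r₀, w₀, U₀)` (and `N(0) = κ(0) = 0`, `ζ(0) = √E₀`),
together with the constraint. -/
structure IsShootingSolOn (r₀ w₀ U₀ : ℝ) (ρmax : EReal)
    (r N w U κ ζ : ℝ → ℝ) : Prop where
  init_r : r 0 = r₀
  init_N : N 0 = 0
  init_w : w 0 = w₀
  init_U : U 0 = U₀
  init_κ : κ 0 = 0
  init_ζ : ζ 0 = Real.sqrt (initialEnergy r₀ w₀ U₀)
  r_pos : ∀ ρ ∈ fwdDom ρmax, 0 < r ρ
  ode_r : ∀ ρ ∈ fwdDom ρmax, HasDerivWithinAt r (r ρ * N ρ) (fwdDom ρmax) ρ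
  ode_N : ∀ ρ ∈ fwdDom ρmax,
      HasDerivWithinAt N (1 - (1 - w ρ ^ 2) ^ 2 / r ρ ^ 2 - κ ρ * N ρ) (fwdDom ρmax) ρ
  ode_w : ∀ ρ ∈ fwdDom ρmax, HasDerivWithinAt w (r ρ * U ρ) (fwdDom ρmax) ρ
  ode_U : ∀ ρ ∈ fwdDom ρmax,
      HasDerivWithinAt U (-(κ ρ - N ρ) * U ρ - w ρ * (1 - w ρ ^ 2) / r ρ) (fwdDom ρmax) ρ
  ode_κ : ∀ ρ ∈ fwdDom ρmax, HasDerivWithinAt κ (1 + 2 * U ρ ^ 2 - κ ρ ^ 2) (fwdDom ρmax) ρ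
  ode_ζ : ∀ ρ ∈ fwdDom ρmax, HasDerivWithinAt ζ (-(κ ρ) * ζ ρ) (fwdDom ρmax) ρ
  constraint : ∀ ρ ∈ fwdDom ρmax,
      ζ ρ ^ 2 = 1 + 2 * U ρ ^ 2 - (1 - w ρ ^ 2) ^ 2 / r ρ ^ 2 - 2 * κ ρ * N ρ + N ρ ^ 2

/-- A maximal forward solution: a solution on `[0, ρmax)` such that no solution with the
same initial data exists on a strictly larger forward interval. -/
def IsMaximalShootingSol (r₀ w₀ U₀ : ℝ) (ρmax : EReal)
    (r N w U κ ζ : ℝ → ℝ) : Prop :=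
  0 < ρmax ∧ IsShootingSolOn r₀ w₀ U₀ ρmax r N w U κ ζ ∧
    ∀ ρmax' : EReal, ρmax < ρmax' →
      ¬ ∃ r' N' w' U' κ' ζ' : ℝ → ℝ, IsShootingSolOn r₀ w₀ U₀ ρmax' r' N' w' U' κ' ζ'

/-- The set of zeros of `w` in `(0, ρmax)`. -/
def zerosOf (w : ℝ → ℝ) (ρmax : EReal) : Set ℝ :=
  {ρ : ℝ | 0 < ρ ∧ (ρ : EReal) < ρmax ∧ w ρ = 0}

/-- Singular orbit: the solution exists only up to a finite point `ρm`, at which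
`r → 0`, `N → −∞`, while `w, U, κ, ζ` remain bounded. -/
def SingularSol (ρmax : EReal) (r N w U κ ζ : ℝ → ℝ) : Prop :=
  ∃ ρm : ℝ, ρmax = (ρm : EReal) ∧ 0 < ρm ∧
    Tendsto r (𝓝[<] ρm) (𝓝 0) ∧ Tendsto N (𝓝[<] ρm) atBot ∧
    ∃ C : ℝ, ∀ ρ ∈ fwdDom ρmax, |w ρ| ≤ C ∧ |U ρ| ≤ C ∧ |κ ρ| ≤ C ∧ |ζ ρ| ≤ C

/-- Escaping singular orbit: singular, `w` leaves the strip `|w| ≤ 1`, and `w` has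
exactly `n` zeros for `ρ > 0`. -/
def EscapingSol (n : ℕ) (ρmax : EReal) (r N w U κ ζ : ℝ → ℝ) : Prop :=
  SingularSol ρmax r N w U κ ζ ∧ (∃ ρ ∈ fwdDom ρmax, 1 < |w ρ|) ∧
    (zerosOf w ρmax).Finite ∧ (zerosOf w ρmax).ncard = n

/-- Crashing singular orbit: singular with `|w| ≤ 1` on the whole domain. -/
def CrashingSol (ρmax : EReal) (r N w U κ ζ : ℝ → ℝ) : Prop :=
  SingularSol ρmax r N w U κ ζ ∧ ∀ ρ ∈ fwdDom ρmax, |w ρ| ≤ 1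

/-- Oscillatory orbit: global, with `(w, w') = (w, rU) → (0, 0)` as `ρ → ∞`. -/
def OscillatorySol (ρmax : EReal) (r N w U κ ζ : ℝ → ℝ) : Prop :=
  ρmax = ⊤ ∧ Tendsto w atTop (𝓝 0) ∧ Tendsto (fun ρ => r ρ * U ρ) atTop (𝓝 0)

/-- Regular orbit: global, with `(|w|, w') → (1, 0)` as `ρ → ∞`, and `w` has exactly
`n` zeros for `ρ > 0`. -/
def RegularSol (n : ℕ) (ρmax : EReal) (r N w U κ ζ : ℝ → ℝ) : Prop :=
  ρmax = ⊤ ∧ Tendsto (fun ρ => |w ρ|) atTop (𝓝 1) ∧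
    Tendsto (fun ρ => r ρ * U ρ) atTop (𝓝 0) ∧
    (zerosOf w ρmax).Finite ∧ (zerosOf w ρmax).ncard = n

/-- Initial data whose (unique) maximal orbit is escaping singular with `n` zeros of `w`. -/
def InE (n : ℕ) (r₀ w₀ U₀ : ℝ) : Prop :=
  Admissible r₀ w₀ U₀ ∧ ∃ (ρmax : EReal) (r N w U κ ζ : ℝ → ℝ),
    IsMaximalShootingSol r₀ w₀ U₀ ρmax r N w U κ ζ ∧ EscapingSol n ρmax r N w U κ ζ

/-- Initial data whose maximal orbit is crashing singular. -/
def InC (r₀ w₀ U₀ : ℝ) : Prop :=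
  Admissible r₀ w₀ U₀ ∧ ∃ (ρmax : EReal) (r N w U κ ζ : ℝ → ℝ),
    IsMaximalShootingSol r₀ w₀ U₀ ρmax r N w U κ ζ ∧ CrashingSol ρmax r N w U κ ζ

/-- Initial data whose maximal orbit is oscillatory. -/
def InO (r₀ w₀ U₀ : ℝ) : Prop :=
  Admissible r₀ w₀ U₀ ∧ ∃ (ρmax : EReal) (r N w U κ ζ : ℝ → ℝ),
    IsMaximalShootingSol r₀ w₀ U₀ ρmax r N w U κ ζ ∧ OscillatorySol ρmax r N w U κ ζ

/-- Initial data whose maximal orbit is regular with `n` zeros of `w`. -/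
def InR (n : ℕ) (r₀ w₀ U₀ : ℝ) : Prop :=
  Admissible r₀ w₀ U₀ ∧ ∃ (ρmax : EReal) (r N w U κ ζ : ℝ → ℝ),
    IsMaximalShootingSol r₀ w₀ U₀ ρmax r N w U κ ζ ∧ RegularSol n ρmax r N w U κ ζ

/-!
Write `A = r² - (1 - w²)²`, so that `N' + κN = A / r²`: with the integrating factor
`exp (∫ κ)`, the product `exp (∫ κ) * N` is nondecreasing wherever `A ≥ 0`. As long as `N ≥ 0`, `r` is
nondecreasing, so `r ≥ r₀ ≥ 1 ≥ 1 - w²` and `A ≥ 0` while `|w| ≤ 1`; hence once positive, `N`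
cannot return to zero. Just after `ρ = 0`, `A > 0`: either `A(0) > 0`, or `(r₀, w₀) = (1, 0)`,
in which case `A(0) = A'(0) = 0` and `A''(0) = 4U₀²`, positive unless the data are `(1, 0, 0)`.
For those data the solution is static, by Grönwall's inequality for the deviation
`(r - 1, N, w, U)`, whose derivative is bounded by a multiple of its norm on compact intervals.
-/

theorem HasDerivWithinAt.eventually_gt_of_pos {f : ℝ → ℝ} {f' a : ℝ} {s : Set ℝ}
    (hf : HasDerivWithinAt f f' s a) (hs : s ∈ 𝓝[≥] a) (hf' : 0 < f') :
    ∀ᶠ t in 𝓝[>] a, f a < f t := by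
  have hslope := (hasDerivWithinAt_iff_tendsto_slope' self_notMem_Ioi).1
    (hf.mono_of_mem_nhdsWithin (nhdsWithin_mono a Ioi_subset_Ici_self hs))
  filter_upwards [hslope (Ioi_mem_nhds hf'), self_mem_nhdsWithin] with t ht hat
  rw [mem_preimage, mem_Ioi, slope_def_field] at ht
  exact sub_pos.1 ((div_pos_iff_of_pos_right (sub_pos.2 hat)).1 ht)

theorem hasDerivWithinAt_Ioo_of_Icc_subset {f f' : ℝ → ℝ} {s : Set ℝ} {a b : ℝ}
    (hs : Icc a b ⊆ s) (hf : ∀ t ∈ s, HasDerivWithinAt f (f' t) s t) :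
    ∀ t ∈ Ioo a b, HasDerivWithinAt f (f' t) (Ioo a b) t :=
  fun t ht => (hf t (hs (Ioo_subset_Icc_self ht))).mono (Ioo_subset_Icc_self.trans hs)

theorem eventually_gt_of_eventually_deriv_pos {f f' : ℝ → ℝ} {a : ℝ} {s : Set ℝ}
    (hs : s ∈ 𝓝[≥] a) (hf : ∀ t ∈ s, HasDerivWithinAt f (f' t) s t)
    (hf' : ∀ᶠ t in 𝓝[>] a, 0 < f' t) : ∀ᶠ t in 𝓝[>] a, f a < f t := by
  obtain ⟨u, hau, hus⟩ := mem_nhdsGE_iff_exists_Icc_subset.1 hs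
  obtain ⟨v, hav, hvpos⟩ := mem_nhdsGT_iff_exists_Ioc_subset.1 hf'
  have hab : a < min u v := lt_min hau hav
  have hsub : Icc a (min u v) ⊆ s := (Icc_subset_Icc_right (min_le_left u v)).trans hus
  have hmono : StrictMonoOn f (Icc a (min u v)) := by
    refine strictMonoOn_of_hasDerivWithinAt_pos (convex_Icc _ _) (f' := f')
      (fun t ht => (hf t (hsub ht)).continuousWithinAt.mono hsub) ?_ ?_ <;> rw [interior_Icc]
    · exact hasDerivWithinAt_Ioo_of_Icc_subset hsub hf
    · exact fun t ht => hvpos ⟨ht.1, ht.2.le.trans (min_le_right u v)⟩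
  exact mem_nhdsGT_iff_exists_Ioc_subset.2 ⟨min u v, hab, fun t ht =>
    hmono (left_mem_Icc.2 hab.le) (Ioc_subset_Icc_self ht) ht.1⟩

theorem ContinuousOn.exists_first_nonpos {f : ℝ → ℝ} {a b : ℝ} (hab : a ≤ b)
    (hf : ContinuousOn f (Icc a b)) (hb : f b ≤ 0) :
    ∃ τ ∈ Icc a b, f τ ≤ 0 ∧ ∀ t ∈ Ico a τ, 0 < f t := by
  set Z := Icc a b ∩ f ⁻¹' Iic 0
  have hZ : IsClosed Z := hf.preimage_isClosed_of_isClosed isClosed_Icc isClosed_Iic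
  have hbZ : b ∈ Z := ⟨right_mem_Icc.2 hab, hb⟩
  have hτ := hZ.csInf_mem ⟨b, hbZ⟩ ⟨a, fun t ht => ht.1.1⟩
  refine ⟨sInf Z, hτ.1, hτ.2, fun t ht => lt_of_not_ge fun hft => ?_⟩
  exact ht.2.not_ge (csInf_le ⟨a, fun _ ht => ht.1.1⟩ ⟨⟨ht.1, ht.2.le.trans hτ.1.2⟩, hft⟩)

theorem exists_hasDerivAt_eq_of_continuousOn_Icc {k : ℝ → ℝ} {a b : ℝ} (hab : a ≤ b)
    (hk : ContinuousOn k (Icc a b)) : ∃ Φ : ℝ → ℝ, ∀ x ∈ Icc a b, HasDerivAt Φ (k x) x := by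
  have hext : Continuous (IccExtend hab (domRestrict (Icc a b) k)) :=
    (continuousOn_iff_continuous_domRestrict.1 hk).Icc_extend'
  refine ⟨fun x => ∫ t in a..x, IccExtend hab (domRestrict (Icc a b) k) t, fun x hx => ?_⟩
  have hΦ := (hext.integral_hasStrictDerivAt a x).hasDerivAt
  rwa [IccExtend_of_mem hab _ hx] at hΦ

theorem HasDerivWithinAt.exp_mul_of_hasDerivAt {f Φ : ℝ → ℝ} {f' k x : ℝ} {s : Set ℝ}
    (hΦ : HasDerivAt Φ k x) (hf : HasDerivWithinAt f f' s x) :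
    HasDerivWithinAt (fun y => Real.exp (Φ y) * f y) (Real.exp (Φ x) * (f' + k * f x)) s x :=
  (hΦ.hasDerivWithinAt.exp.mul hf).congr_deriv (by ring)

theorem pos_of_deriv_add_mul_pos {f f' k : ℝ → ℝ} {a b : ℝ} (hab : a < b)
    (hk : ContinuousOn k (Icc a b)) (hf : ContinuousOn f (Icc a b))
    (hf' : ∀ x ∈ Ioo a b, HasDerivWithinAt f (f' x) (Ioo a b) x)
    (h : ∀ x ∈ Ioo a b, 0 < f' x + k x * f x) (ha : 0 ≤ f a) : 0 < f b := by
  obtain ⟨Φ, hΦ⟩ := exists_hasDerivAt_eq_of_continuousOn_Icc hab.le hk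
  have hmono : StrictMonoOn (fun y => exp (Φ y) * f y) (Icc a b) := by
    refine strictMonoOn_of_hasDerivWithinAt_pos (convex_Icc a b)
      (f' := fun x => exp (Φ x) * (f' x + k x * f x))
      (fun x hx => ((hΦ x hx).continuousAt.rexp.continuousWithinAt).mul (hf x hx)) ?_ ?_ <;>
      rw [interior_Icc]
    · exact fun x hx => (hf' x hx).exp_mul_of_hasDerivAt (hΦ x (Ioo_subset_Icc_self hx))
    · exact fun x hx => mul_pos (exp_pos _) (h x hx)
  have hlt := hmono (left_mem_Icc.2 hab.le) (right_mem_Icc.2 hab.le) hab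
  exact pos_of_mul_pos_right ((mul_nonneg (exp_pos _).le ha).trans_lt hlt) (exp_pos _).le

theorem pos_of_deriv_add_mul_nonneg {f f' k : ℝ → ℝ} {a b : ℝ} (hab : a ≤ b)
    (hk : ContinuousOn k (Icc a b)) (hf : ContinuousOn f (Icc a b))
    (hf' : ∀ x ∈ Ioo a b, HasDerivWithinAt f (f' x) (Ioo a b) x)
    (h : ∀ x ∈ Ioo a b, 0 ≤ f' x + k x * f x) (ha : 0 < f a) : 0 < f b := by
  obtain ⟨Φ, hΦ⟩ := exists_hasDerivAt_eq_of_continuousOn_Icc hab hk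
  have hmono : MonotoneOn (fun y => exp (Φ y) * f y) (Icc a b) := by
    refine monotoneOn_of_hasDerivWithinAt_nonneg (convex_Icc a b)
      (f' := fun x => exp (Φ x) * (f' x + k x * f x))
      (fun x hx => ((hΦ x hx).continuousAt.rexp.continuousWithinAt).mul (hf x hx)) ?_ ?_ <;>
      rw [interior_Icc]
    · exact fun x hx => (hf' x hx).exp_mul_of_hasDerivAt (hΦ x (Ioo_subset_Icc_self hx))
    · exact fun x hx => mul_nonneg (exp_pos _).le (h x hx)
  have hle := hmono (left_mem_Icc.2 hab) (right_mem_Icc.2 hab) hab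
  exact pos_of_mul_pos_right ((mul_pos (exp_pos _) ha).trans_le hle) (exp_pos _).le

theorem Icc_subset_fwdDom {ρmax : EReal} {a b : ℝ} (ha : 0 ≤ a) (hb : b ∈ fwdDom ρmax) :
    Icc a b ⊆ fwdDom ρmax :=
  fun _ ht => ⟨ha.trans ht.1, (EReal.coe_le_coe_iff.2 ht.2).trans_lt hb.2⟩

theorem fwdDom_mem_nhdsWithin_Ici {ρmax : EReal} {t : ℝ} (ht : t ∈ fwdDom ρmax) :
    fwdDom ρmax ∈ 𝓝[≥] t := by
  have hopen : IsOpen {s : ℝ | (s : EReal) < ρmax} :=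
    isOpen_lt continuous_coe_real_ereal continuous_const
  filter_upwards [self_mem_nhdsWithin, nhdsWithin_le_nhds (hopen.mem_nhds ht.2)] with s hs hs'
  exact ⟨ht.1.trans hs, hs'⟩

theorem norm_shootingField_le {r N w U κ K : ℝ} (hr : r ≠ 0)
    (hK : |r| + |(r + 1) / r ^ 2| + |w * (2 - w ^ 2) / r ^ 2| + |κ| + |κ - N| +
      |(1 - w ^ 2) / r| ≤ K) :
    ‖(r * N, 1 - (1 - w ^ 2) ^ 2 / r ^ 2 - κ * N, r * U, -(κ - N) * U - w * (1 - w ^ 2) / r)‖ ≤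
      3 * K * ‖(r - 1, N, w, U)‖ := by
  set x := (r - 1, N, w, U)
  have ha : |r - 1| ≤ ‖x‖ := norm_fst_le x
  have hb : |N| ≤ ‖x‖ := (norm_fst_le x.2).trans (norm_snd_le x)
  have hc : |w| ≤ ‖x‖ := ((norm_fst_le x.2.2).trans (norm_snd_le x.2)).trans (norm_snd_le x)
  have hd : |U| ≤ ‖x‖ := ((norm_snd_le x.2.2).trans (norm_snd_le x.2)).trans (norm_snd_le x)
  have h0 := abs_nonneg r; have h1 := abs_nonneg ((r + 1) / r ^ 2)
  have h2 := abs_nonneg (w * (2 - w ^ 2) / r ^ 2); have h3 := abs_nonneg κ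
  have h4 := abs_nonneg (κ - N); have h5 := abs_nonneg ((1 - w ^ 2) / r)
  have hK0 : 0 ≤ K := by linarith
  have hKx := mul_nonneg hK0 (norm_nonneg x)
  have key : ∀ α u : ℝ, |α| ≤ K → |u| ≤ ‖x‖ → |α * u| ≤ K * ‖x‖ := fun α u hα hu => by
    rw [abs_mul]; exact mul_le_mul hα hu (abs_nonneg u) hK0
  have hN' : 1 - (1 - w ^ 2) ^ 2 / r ^ 2 - κ * N =
      (r + 1) / r ^ 2 * (r - 1) + w * (2 - w ^ 2) / r ^ 2 * w - κ * N := by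
    field_simp; ring
  have hU' : -(κ - N) * U - w * (1 - w ^ 2) / r = -((κ - N) * U) - (1 - w ^ 2) / r * w := by ring
  simp only [norm_prod_le_iff, Real.norm_eq_abs]
  refine ⟨?_, ?_, ?_, ?_⟩
  · linarith [key r N (by linarith) hb]
  · rw [hN']
    linarith [abs_sub ((r + 1) / r ^ 2 * (r - 1) + w * (2 - w ^ 2) / r ^ 2 * w) (κ * N),
      abs_add_le ((r + 1) / r ^ 2 * (r - 1)) (w * (2 - w ^ 2) / r ^ 2 * w),
      key ((r + 1) / r ^ 2) _ (by linarith) ha, key (w * (2 - w ^ 2) / r ^ 2) _ (by linarith) hc,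
      key κ _ (by linarith) hb]
  · linarith [key r U (by linarith) hd]
  · rw [hU']
    linarith [abs_sub (-((κ - N) * U)) ((1 - w ^ 2) / r * w), abs_neg ((κ - N) * U),
      key (κ - N) _ (by linarith) hd, key ((1 - w ^ 2) / r) _ (by linarith) hc]

namespace IsShootingSolOn

variable {r₀ w₀ U₀ : ℝ} {ρmax : EReal} {r N w U κ ζ : ℝ → ℝ}

theorem continuousOn_r (hS : IsShootingSolOn r₀ w₀ U₀ ρmax r N w U κ ζ) :
    ContinuousOn r (fwdDom ρmax) := fun t ht => (hS.ode_r t ht).continuousWithinAt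

theorem continuousOn_N (hS : IsShootingSolOn r₀ w₀ U₀ ρmax r N w U κ ζ) :
    ContinuousOn N (fwdDom ρmax) := fun t ht => (hS.ode_N t ht).continuousWithinAt

theorem continuousOn_w (hS : IsShootingSolOn r₀ w₀ U₀ ρmax r N w U κ ζ) :
    ContinuousOn w (fwdDom ρmax) := fun t ht => (hS.ode_w t ht).continuousWithinAt

theorem continuousOn_κ (hS : IsShootingSolOn r₀ w₀ U₀ ρmax r N w U κ ζ) :
    ContinuousOn κ (fwdDom ρmax) := fun t ht => (hS.ode_κ t ht).continuousWithinAt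

theorem hasDerivWithinAt_deviation (hS : IsShootingSolOn r₀ w₀ U₀ ρmax r N w U κ ζ) {t : ℝ}
    (ht : t ∈ fwdDom ρmax) :
    HasDerivWithinAt (fun s => (r s - 1, N s, w s, U s))
      (r t * N t, 1 - (1 - w t ^ 2) ^ 2 / r t ^ 2 - κ t * N t, r t * U t,
        -(κ t - N t) * U t - w t * (1 - w t ^ 2) / r t) (fwdDom ρmax) t :=
  ((hS.ode_r t ht).sub_const 1).prodMk
    ((hS.ode_N t ht).prodMk ((hS.ode_w t ht).prodMk (hS.ode_U t ht)))

theorem r_eq_one_and_w_eq_zero (hS : IsShootingSolOn 1 0 0 ρmax r N w U κ ζ) {ρ : ℝ}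
    (hρ : ρ ∈ fwdDom ρmax) : r ρ = 1 ∧ w ρ = 0 := by
  have hsub := Icc_subset_fwdDom le_rfl hρ
  have hr0 : ∀ t ∈ Icc 0 ρ, r t ≠ 0 := fun t ht => (hS.r_pos t (hsub ht)).ne'
  set c : ℝ → ℝ := fun t => |r t| + |(r t + 1) / r t ^ 2| + |w t * (2 - w t ^ 2) / r t ^ 2| +
    |κ t| + |κ t - N t| + |(1 - w t ^ 2) / r t|
  have hc : ContinuousOn c (Icc 0 ρ) := by
    have := hS.continuousOn_r.mono hsub
    have := hS.continuousOn_N.mono hsub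
    have := hS.continuousOn_w.mono hsub
    have := hS.continuousOn_κ.mono hsub
    have hr2 : ∀ t ∈ Icc 0 ρ, r t ^ 2 ≠ 0 := fun t ht => pow_ne_zero 2 (hr0 t ht)
    fun_prop (disch := assumption)
  obtain ⟨K, hK⟩ := isCompact_Icc.exists_bound_of_continuousOn hc
  have hdev := eq_zero_of_abs_deriv_le_mul_abs_self_of_eq_zero_right (K := 3 * K)
    (fun t ht => (hS.hasDerivWithinAt_deviation (hsub ht)).continuousWithinAt.mono hsub)
    (fun t ht => (hS.hasDerivWithinAt_deviation (hsub (Ico_subset_Icc_self ht)))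
      |>.mono_of_mem_nhdsWithin (fwdDom_mem_nhdsWithin_Ici (hsub (Ico_subset_Icc_self ht))))
    (by simp [hS.init_r, hS.init_N, hS.init_w, hS.init_U]) ?_ ρ (right_mem_Icc.2 hρ.1)
  · simp only [Prod.mk_eq_zero, sub_eq_zero] at hdev
    exact ⟨hdev.1, hdev.2.2.1⟩
  intro t ht
  exact norm_shootingField_le (hr0 t (Ico_subset_Icc_self ht))
    ((le_abs_self _).trans (hK t (Ico_subset_Icc_self ht)))

theorem hasDerivWithinAt_sq_sub_sq (hS : IsShootingSolOn r₀ w₀ U₀ ρmax r N w U κ ζ) {t : ℝ}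
    (ht : t ∈ fwdDom ρmax) :
    HasDerivWithinAt (fun s => r s ^ 2 - (1 - w s ^ 2) ^ 2)
      (2 * r t ^ 2 * N t + 4 * r t * w t * U t * (1 - w t ^ 2)) (fwdDom ρmax) t := by
  refine (((hS.ode_r t ht).pow 2).sub
    ((((hS.ode_w t ht).pow 2).const_sub 1).pow 2)).congr_deriv ?_
  simp only [Pi.pow_apply]
  push_cast
  ring

theorem hasDerivWithinAt_deriv_sq_sub_sq_at_zero (hS : IsShootingSolOn 1 0 U₀ ρmax r N w U κ ζ)
    (h0 : (0 : ℝ) ∈ fwdDom ρmax) :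
    HasDerivWithinAt (fun s => 2 * r s ^ 2 * N s + 4 * r s * w s * U s * (1 - w s ^ 2))
      (4 * U₀ ^ 2) (fwdDom ρmax) 0 := by
  have hr := hS.ode_r 0 h0
  have hw := hS.ode_w 0 h0
  refine ((((hr.pow 2).const_mul 2).mul (hS.ode_N 0 h0)).add ((((hr.const_mul 4).mul hw).mul
    (hS.ode_U 0 h0)).mul ((hw.pow 2).const_sub 1))).congr_deriv ?_
  simp [hS.init_r, hS.init_N, hS.init_w, hS.init_U, hS.init_κ]
  ring

theorem eventually_sq_lt_sq (hS : IsShootingSolOn r₀ w₀ U₀ ρmax r N w U κ ζ) (hr₀ : 1 ≤ r₀)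
    (hw₀ : |w₀| ≤ 1) (hdata : ¬(r₀ = 1 ∧ w₀ = 0 ∧ U₀ = 0)) (h0 : (0 : ℝ) ∈ fwdDom ρmax) :
    ∀ᶠ t in 𝓝[>] 0, (1 - w t ^ 2) ^ 2 < r t ^ 2 := by
  have hmem := fwdDom_mem_nhdsWithin_Ici h0
  have hw2 : w₀ ^ 2 ≤ 1 := (sq_le_one_iff_abs_le_one _).2 hw₀
  have hA0 : (1 - w₀ ^ 2) ^ 2 ≤ r₀ ^ 2 := by nlinarith
  suffices ∀ᶠ t in 𝓝[>] 0, 0 < r t ^ 2 - (1 - w t ^ 2) ^ 2 from this.mono fun t ht => by linarith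
  rcases hA0.lt_or_eq with hlt | heq
  · have hc := (hS.hasDerivWithinAt_sq_sub_sq h0).continuousWithinAt
    refine nhdsWithin_le_of_mem (nhdsWithin_mono _ Ioi_subset_Ici_self hmem) (hc (Ioi_mem_nhds ?_))
    simp only [hS.init_r, hS.init_w]
    linarith
  · obtain rfl : r₀ = 1 := by nlinarith
    obtain rfl : w₀ = 0 := pow_eq_zero_iff two_ne_zero |>.1 (by nlinarith)
    have hU₀ : U₀ ≠ 0 := fun h => hdata ⟨rfl, rfl, h⟩
    have hq := (hS.hasDerivWithinAt_deriv_sq_sub_sq_at_zero h0).eventually_gt_of_pos hmem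
      (by positivity)
    have hA := eventually_gt_of_eventually_deriv_pos hmem
      (fun t ht => hS.hasDerivWithinAt_sq_sub_sq ht)
      (hq.mono fun t ht => by simpa [hS.init_N, hS.init_w] using ht)
    exact hA.mono fun t ht => by simpa [hS.init_r, hS.init_w] using ht

theorem eventually_N_pos (hS : IsShootingSolOn r₀ w₀ U₀ ρmax r N w U κ ζ) (hr₀ : 1 ≤ r₀)
    (hw₀ : |w₀| ≤ 1) (hdata : ¬(r₀ = 1 ∧ w₀ = 0 ∧ U₀ = 0)) (h0 : (0 : ℝ) ∈ fwdDom ρmax) :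
    ∀ᶠ t in 𝓝[>] 0, 0 < N t := by
  obtain ⟨ε, hε, hεA⟩ := mem_nhdsGT_iff_exists_Ioc_subset.1
    ((hS.eventually_sq_lt_sq hr₀ hw₀ hdata h0).and
      (nhdsWithin_mono _ Ioi_subset_Ici_self (fwdDom_mem_nhdsWithin_Ici h0)))
  refine mem_nhdsGT_iff_exists_Ioc_subset.2 ⟨ε, hε, fun t ht => ?_⟩
  have hsub := Icc_subset_fwdDom le_rfl (hεA ht).2
  refine pos_of_deriv_add_mul_pos ht.1 (hS.continuousOn_κ.mono hsub)
    (hS.continuousOn_N.mono hsub) (hasDerivWithinAt_Ioo_of_Icc_subset hsub hS.ode_N)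
    (fun s hs => ?_) hS.init_N.ge
  rw [sub_add_cancel, sub_pos, div_lt_one (pow_pos (hS.r_pos s (hsub (Ioo_subset_Icc_self hs))) 2)]
  exact (hεA ⟨hs.1, hs.2.le.trans ht.2⟩).1

theorem N_pos_of_pos_on_Ioo (hS : IsShootingSolOn r₀ w₀ U₀ ρmax r N w U κ ζ) (hr₀ : 1 ≤ r₀)
    {τ : ℝ} (hτ : τ ∈ fwdDom ρmax) (hτ0 : 0 < τ) (hN : ∀ t ∈ Ioo 0 τ, 0 < N t)
    (hw : ∀ t ∈ Icc 0 τ, |w t| ≤ 1) : 0 < N τ := by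
  have hsub := Icc_subset_fwdDom le_rfl hτ
  have hmono : MonotoneOn r (Icc 0 τ) := by
    refine monotoneOn_of_hasDerivWithinAt_nonneg (convex_Icc 0 τ) (f' := fun t => r t * N t)
      (hS.continuousOn_r.mono hsub) ?_ ?_ <;> rw [interior_Icc]
    · exact hasDerivWithinAt_Ioo_of_Icc_subset hsub hS.ode_r
    · exact fun t ht => mul_nonneg (hS.r_pos t (hsub (Ioo_subset_Icc_self ht))).le (hN t ht).le
  have hsource : ∀ t ∈ Icc 0 τ, 0 ≤ 1 - (1 - w t ^ 2) ^ 2 / r t ^ 2 := by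
    intro t ht
    have hr : 1 ≤ r t := (hS.init_r ▸ hr₀).trans (hmono (left_mem_Icc.2 hτ0.le) ht ht.1)
    have hw2 : w t ^ 2 ≤ 1 := (sq_le_one_iff_abs_le_one _).2 (hw t ht)
    rw [sub_nonneg, div_le_one (by positivity)]
    nlinarith [sq_nonneg (w t)]
  have hsub' : Icc (τ / 2) τ ⊆ fwdDom ρmax := Icc_subset_fwdDom (by positivity) hτ
  refine pos_of_deriv_add_mul_nonneg (by linarith) (hS.continuousOn_κ.mono hsub')
    (hS.continuousOn_N.mono hsub') (hasDerivWithinAt_Ioo_of_Icc_subset hsub' hS.ode_N)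
    (fun t ht => ?_) (hN _ ⟨by positivity, by linarith⟩)
  rw [sub_add_cancel]
  exact hsource t ⟨by linarith [ht.1], ht.2.le⟩

theorem N_pos_of_abs_w_le_one (hS : IsShootingSolOn r₀ w₀ U₀ ρmax r N w U κ ζ) (hr₀ : 1 ≤ r₀)
    (hdata : ¬(r₀ = 1 ∧ w₀ = 0 ∧ U₀ = 0)) {ρ : ℝ} (hρ : ρ ∈ fwdDom ρmax) (hρ0 : 0 < ρ)
    (hw : ∀ s : ℝ, 0 ≤ s → s ≤ ρ → |w s| ≤ 1) : 0 < N ρ := by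
  by_contra! hNρ
  have hsub := Icc_subset_fwdDom le_rfl hρ
  have h0 : (0 : ℝ) ∈ fwdDom ρmax := hsub (left_mem_Icc.2 hρ0.le)
  have hw₀ : |w₀| ≤ 1 := hS.init_w ▸ hw 0 le_rfl hρ0.le
  obtain ⟨ε, hε, hεN⟩ := mem_nhdsGT_iff_exists_Ioc_subset.1
    (hS.eventually_N_pos hr₀ hw₀ hdata h0)
  obtain ⟨τ, hτ, hNτ, hfirst⟩ := ContinuousOn.exists_first_nonpos (min_le_right ε ρ)
    (hS.continuousOn_N.mono (Icc_subset_fwdDom (le_min hε.le hρ0.le) hρ)) hNρ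
  have hτ0 : 0 < τ := (lt_min hε hρ0).trans_le hτ.1
  refine hNτ.not_gt (hS.N_pos_of_pos_on_Ioo hr₀ (hsub ⟨hτ0.le, hτ.2⟩) hτ0 (fun t ht => ?_)
    (fun t ht => hw t ht.1 (ht.2.trans hτ.2)))
  rcases le_or_gt t (min ε ρ) with hle | hgt
  · exact hεN ⟨ht.1, hle.trans (min_le_left ε ρ)⟩
  · exact hfirst t ⟨hgt.le, ht.2⟩

end IsShootingSolOn

theorem N_positive_for_large_r0_general (r₀ w₀ U₀ : ℝ)
    (ρmax : EReal) (r N w U κ ζ : ℝ → ℝ)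
    (hsol : IsMaximalShootingSol r₀ w₀ U₀ ρmax r N w U κ ζ)
    (hr₀ : 1 ≤ r₀) :
    (r₀ = 1 ∧ w₀ = 0 ∧ U₀ = 0 ∧ ∀ ρ ∈ fwdDom ρmax, r ρ = 1 ∧ w ρ = 0) ∨
    (∀ ρ ∈ fwdDom ρmax, 0 < ρ → (∀ s : ℝ, 0 ≤ s → s ≤ ρ → |w s| ≤ 1) → 0 < N ρ) := by
  obtain ⟨-, hS, -⟩ := hsol
  by_cases hdata : r₀ = 1 ∧ w₀ = 0 ∧ U₀ = 0
  · obtain ⟨rfl, rfl, rfl⟩ := hdata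
    exact Or.inl ⟨rfl, rfl, rfl, fun ρ hρ => hS.r_eq_one_and_w_eq_zero hρ⟩
  · exact Or.inr fun ρ hρ hρ0 hw => hS.N_pos_of_abs_w_le_one hr₀ hdata hρ hρ0 hw

/-- For `r₀ ≥ 1`, either the solution is the trivial one with `r ≡ 1`, `w ≡ 0`
(and `(r₀, w₀, U₀) = (1, 0, 0)`), or `N > 0` at every `ρ > 0` in the domain up to which
`|w| ≤ 1` has held. -/
theorem N_positive_for_large_r0 (r₀ w₀ U₀ : ℝ) (hadm : Admissible r₀ w₀ U₀)
    (ρmax : EReal) (r N w U κ ζ : ℝ → ℝ)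
    (hsol : IsMaximalShootingSol r₀ w₀ U₀ ρmax r N w U κ ζ)
    (hr₀ : 1 ≤ r₀) :
    (r₀ = 1 ∧ w₀ = 0 ∧ U₀ = 0 ∧ ∀ ρ ∈ fwdDom ρmax, r ρ = 1 ∧ w ρ = 0) ∨
    (∀ ρ ∈ fwdDom ρmax, 0 < ρ → (∀ s : ℝ, 0 ≤ s → s ≤ ρ → |w s| ≤ 1) → 0 < N ρ) :=
  N_positive_for_large_r0_general r₀ w₀ U₀ ρmax r N w U κ ζ hsol hr₀
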